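/- arXiv:1309.0903 — 5 statements merged into one kernel-verified Lean document; each statement's English description precedes it below -/
import Mathlib

section
/- Let w₀,…,w₄ be positive integer weights and let F ∈ ℂ[x₀,…,x₄] be weighted homogeneous of degree d with respect to (w₀,…,w₄) and quasi-smooth (its partial derivatives vanish simultaneously only at the origin). Then for every index i with wᵢ < d, the polynomial obtained from F by substituting xᵢ = 0 is a nonzero irreducible polynomial in the remaining four variables. -/
/-!
Write `G` and `H` for `F` and `∂F/∂xᵢ` with `xᵢ = 0` substituted. At a point `(q, 0)` the partial
derivatives of `F` are those of `G` together with `H`, so by quasi-smoothness `q = 0` is the only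
common zero of `∇G` and `H`. Now `H` is weighted homogeneous of positive degree `d - wᵢ`, and in a
factorisation `G = A * B` into non-units both factors are weighted homogeneous of positive degree.
By Krull's height theorem, applied at a maximal ideal of height 4 of `ℂ[x]` (a point, by the
Nullstellensatz), three polynomials in four variables vanishing at the origin have a second common
zero `q`; taking `H` and `A`, `B` (or just `H` when `G = 0`), all of `H` and `∇(AB) = A∇B + B∇A`
vanish at `q`, a contradiction.
-/

open MvPolynomial

theorem Finsupp.weight_mapDomain {σ τ M : Type*} [AddCommMonoid M] (f : σ → τ) (w : τ → M)
    (s : σ →₀ ℕ) : Finsupp.weight w (s.mapDomain f) = Finsupp.weight (w ∘ f) s := by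
  simp only [Finsupp.weight_apply]
  rw [Finsupp.sum_mapDomain_index (fun b => zero_smul ℕ (w b)) (fun b m n => add_smul m n (w b))]
  rfl

namespace MvPolynomial

section WeightedScaling

variable {σ R : Type*} [CommSemiring R] (w : σ → ℕ)

/-- `P(t ^ w₀ • x₀, t ^ w₁ • x₁, …)` as a polynomial in `t`: its coefficient of `t ^ n` is the
weight-`n` component of `P`. -/
noncomputable def weightedScaling : MvPolynomial σ R →ₐ[R] Polynomial (MvPolynomial σ R) :=
  aeval fun k => Polynomial.C (X k) * Polynomial.X ^ w k

theorem weightedScaling_monomial (μ : σ →₀ ℕ) (c : R) :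
    weightedScaling w (monomial μ c) = Polynomial.monomial (Finsupp.weight w μ) (monomial μ c) := by
  simp only [weightedScaling, aeval_monomial, mul_pow, Finsupp.prod_mul, ← pow_mul]
  rw [Finsupp.weight_apply, Finsupp.sum, Finsupp.prod, Finsupp.prod, Finset.prod_pow_eq_pow_sum,
    ← Polynomial.C_mul_X_pow_eq_monomial, monomial_eq, Finsupp.prod, map_mul, map_prod,
    ← mul_assoc]
  simp only [map_pow, smul_eq_mul, mul_comm (w _)]
  rfl

theorem coeff_coeff_weightedScaling (P : MvPolynomial σ R) (n : ℕ) (μ : σ →₀ ℕ) :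
    coeff μ ((weightedScaling w P).coeff n) = if Finsupp.weight w μ = n then coeff μ P else 0 := by
  classical
  induction P using MvPolynomial.induction_on' with
  | monomial ν c =>
    rw [weightedScaling_monomial, Polynomial.coeff_monomial, coeff_monomial]
    split_ifs <;> aesop
  | add P Q hP hQ =>
    simp only [map_add, Polynomial.coeff_add, coeff_add, hP, hQ]
    split_ifs <;> simp

variable {w}

theorem weightedScaling_of_isWeightedHomogeneous {P : MvPolynomial σ R} {n : ℕ}
    (hP : IsWeightedHomogeneous w P n) : weightedScaling w P = Polynomial.monomial n P := by
  ext m μ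
  rw [coeff_coeff_weightedScaling, Polynomial.coeff_monomial]
  by_cases hm : n = m
  · subst hm
    rw [if_pos rfl]
    split_ifs with hμ
    · rfl
    · exact (hP.coeff_eq_zero μ hμ).symm
  · rw [if_neg hm, coeff_zero]
    split_ifs with hμ
    · exact hP.coeff_eq_zero μ (hμ ▸ Ne.symm hm)
    · rfl

theorem isWeightedHomogeneous_of_coeff_weightedScaling_eq_zero {P : MvPolynomial σ R} {n : ℕ}
    (hP : ∀ m ≠ n, (weightedScaling w P).coeff m = 0) : IsWeightedHomogeneous w P n := by
  intro μ hμ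
  by_contra hne
  have := congrArg (coeff μ) (hP _ hne)
  rw [coeff_coeff_weightedScaling, if_pos rfl, coeff_zero] at this
  exact hμ this

theorem weightedScaling_ne_zero {P : MvPolynomial σ R} (hP : P ≠ 0) : weightedScaling w P ≠ 0 := by
  obtain ⟨μ, hμ⟩ := exists_coeff_ne_zero hP
  intro h
  have := coeff_coeff_weightedScaling w P (Finsupp.weight w μ) μ
  rw [h, if_pos rfl] at this
  exact hμ (by simpa using this.symm)

end WeightedScaling

theorem IsWeightedHomogeneous.exists_of_mul_left {σ R : Type*} [CommRing R] [IsDomain R]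
    {w : σ → ℕ} {A B : MvPolynomial σ R} {n : ℕ} (h : IsWeightedHomogeneous w (A * B) n)
    (hAB : A * B ≠ 0) : ∃ a, IsWeightedHomogeneous w A a := by
  have hA := weightedScaling_ne_zero (w := w) (left_ne_zero_of_mul hAB)
  have hB := weightedScaling_ne_zero (w := w) (right_ne_zero_of_mul hAB)
  have hprod := weightedScaling_of_isWeightedHomogeneous h
  rw [map_mul] at hprod
  have hdeg := congrArg Polynomial.natDegree hprod
  have htrail := congrArg Polynomial.natTrailingDegree hprod
  rw [Polynomial.natDegree_mul hA hB, Polynomial.natDegree_monomial_eq _ hAB] at hdeg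
  rw [Polynomial.natTrailingDegree_mul hA hB, Polynomial.natTrailingDegree_monomial hAB] at htrail
  have := (weightedScaling w A).natTrailingDegree_le_natDegree
  have := (weightedScaling w B).natTrailingDegree_le_natDegree
  refine ⟨(weightedScaling w A).natDegree,
    isWeightedHomogeneous_of_coeff_weightedScaling_eq_zero fun m hm => ?_⟩
  rcases hm.lt_or_gt with hm | hm
  · exact Polynomial.coeff_eq_zero_of_lt_natTrailingDegree (by omega)
  · exact Polynomial.coeff_eq_zero_of_natDegree_lt hm

theorem IsWeightedHomogeneous.constantCoeff_eq_zero_of_not_isUnit {σ K : Type*} [Field K]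
    {w : σ → ℕ} (hw : ∀ k, w k ≠ 0) {A : MvPolynomial σ K} {a : ℕ}
    (hA : IsWeightedHomogeneous w A a) (hu : ¬IsUnit A) : constantCoeff A = 0 := by
  by_contra h
  have ha : a = 0 := by simpa using (hA h).symm
  subst ha
  rw [← hA.weightedHomogeneousComponent_same, weightedHomogeneousComponent_zero _ hw] at hu
  exact hu ((isUnit_iff_ne_zero.mpr h).map C)

theorem IsWeightedHomogeneous.constantCoeff_eq_zero {σ R M : Type*} [CommSemiring R]
    [AddCommMonoid M] {w : σ → M} {P : MvPolynomial σ R} {n : M}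
    (h : IsWeightedHomogeneous w P n) (hn : n ≠ 0) : constantCoeff P = 0 := by
  rw [constantCoeff_eq]
  exact h.coeff_eq_zero 0 (by simpa using hn.symm)

theorem IsWeightedHomogeneous.constantCoeff_eq_zero_of_dvd {σ K : Type*} [Field K]
    {w : σ → ℕ} (hw : ∀ k, w k ≠ 0) {P A : MvPolynomial σ K} {n : ℕ}
    (h : IsWeightedHomogeneous w P n) (hP : P ≠ 0) (hA : A ∣ P) (hu : ¬IsUnit A) :
    constantCoeff A = 0 := by
  obtain ⟨B, rfl⟩ := hA
  obtain ⟨a, ha⟩ := h.exists_of_mul_left hP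
  exact ha.constantCoeff_eq_zero_of_not_isUnit hw hu

section KillCompl

variable {σ τ R : Type*} [CommSemiring R] {f : σ → τ} (hf : Function.Injective f)

theorem killCompl_X_apply (t : σ) : killCompl (R := R) hf (X (f t)) = X t := by
  simpa using killCompl_rename_app (R := R) hf (X t)

theorem killCompl_X_of_notMem_range {s : τ} (hs : s ∉ Set.range f) :
    killCompl (R := R) hf (X s) = 0 := by
  simp [killCompl, hs]

theorem eval_killCompl (q : σ → R) (P : MvPolynomial τ R) :
    eval q (killCompl hf P) = eval (Function.extend f q 0) P := by
  suffices (aeval q).comp (killCompl hf) = aeval (Function.extend f q 0) from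
    DFunLike.congr_fun this P
  refine algHom_ext fun s => ?_
  by_cases hs : s ∈ Set.range f
  · obtain ⟨t, rfl⟩ := hs
    simp [killCompl_X_apply, hf.extend_apply]
  · rw [AlgHom.comp_apply, killCompl_X_of_notMem_range hf hs, aeval_X,
      Function.extend_apply' _ _ _ fun ⟨t, ht⟩ => hs ⟨t, ht⟩]
    simp

theorem pderiv_killCompl (t : σ) (P : MvPolynomial τ R) :
    pderiv t (killCompl hf P) = killCompl hf (pderiv (f t) P) := by
  classical
  induction P using MvPolynomial.induction_on with
  | C c => simp
  | add P Q hP hQ => simp [hP, hQ]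
  | mul_X P s hP =>
    have hX : pderiv t (killCompl hf (X s : MvPolynomial τ R)) =
        killCompl hf (pderiv (f t) (X s)) := by
      by_cases hs : s ∈ Set.range f
      · obtain ⟨u, rfl⟩ := hs
        simp [killCompl_X_apply, pderiv_X, Pi.single_apply, hf.eq_iff]
      · rw [killCompl_X_of_notMem_range hf hs, pderiv_X_of_ne (R := R) fun h => hs ⟨t, h.symm⟩]
        simp
    simp only [map_mul, Derivation.leibniz, smul_eq_mul, map_add, hP, hX]

theorem IsWeightedHomogeneous.killCompl {M : Type*} [AddCommMonoid M] {w : τ → M}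
    {P : MvPolynomial τ R} {n : M} (h : IsWeightedHomogeneous w P n) :
    IsWeightedHomogeneous (w ∘ f) (killCompl hf P) n := by
  intro s hs
  rw [coeff_killCompl] at hs
  rw [← h hs, Finsupp.weight_mapDomain]

theorem killCompl_subtype_val_eq_aeval [DecidableEq τ] (i : τ) :
    killCompl (R := R) (Subtype.val_injective (p := (· ≠ i))) =
      aeval fun j => if h : j = i then 0 else X ⟨j, h⟩ := by
  refine algHom_ext fun j => ?_
  by_cases h : j = i
  · subst h
    have hj : j ∉ Set.range (Subtype.val : {k // k ≠ j} → τ) := by simp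
    rw [killCompl_X_of_notMem_range _ hj, aeval_X, dif_pos rfl]
  · rw [aeval_X, dif_neg h]
    exact killCompl_X_apply (f := (Subtype.val : {k // k ≠ i} → τ)) Subtype.val_injective ⟨j, h⟩

end KillCompl

def IsQuasiSmooth {σ R : Type*} [CommSemiring R] (F : MvPolynomial σ R) : Prop :=
  ∀ p : σ → R, (∀ i, eval p (pderiv i F) = 0) → p = 0

theorem IsQuasiSmooth.eq_zero_of_eval_pderiv_killCompl {σ τ R : Type*} [CommSemiring R]
    {F : MvPolynomial τ R} (hF : IsQuasiSmooth F) {f : σ → τ} (hf : Function.Injective f)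
    {q : σ → R} (hq : ∀ t, eval q (pderiv t (killCompl hf F)) = 0)
    (hq' : ∀ s ∉ Set.range f, eval q (killCompl hf (pderiv s F)) = 0) : q = 0 := by
  have hp := hF (Function.extend f q 0) fun s => by
    rw [← eval_killCompl hf]
    by_cases hs : s ∈ Set.range f
    · obtain ⟨t, rfl⟩ := hs
      rw [← pderiv_killCompl]
      exact hq t
    · exact hq' s hs
  funext t
  simpa [hf.extend_apply] using congrFun hp (f t)

section Krull

variable {σ K : Type*} [Field K]

theorem exists_isMaximal_natCard_le_height [Finite σ] :
    ∃ M : Ideal (MvPolynomial σ K), M.IsMaximal ∧ (Nat.card σ : ℕ∞) ≤ M.height := by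
  have hdim : ringKrullDim (MvPolynomial σ K) = Nat.card σ := by
    simp [ringKrullDim_eq_zero_of_field]
  have : FiniteRingKrullDim (MvPolynomial σ K) := by
    rw [finiteRingKrullDim_iff_ne_bot_and_top, hdim]
    exact ⟨WithBot.coe_ne_bot, ne_top_of_lt (b := ((Nat.card σ + 1 : ℕ) : WithBot ℕ∞))
      (by exact_mod_cast Nat.lt_succ_self _)⟩
  obtain ⟨M, hM, hMh⟩ := Ideal.exists_isMaximal_height (R := MvPolynomial σ K)
  refine ⟨M, hM, ?_⟩
  rw [hdim] at hMh
  exact_mod_cast hMh.ge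

theorem eval_aeval_X_add_C (x c : σ → K) (f : MvPolynomial σ K) :
    eval x (aeval (fun k => X k + C (c k)) f) = eval (x + c) f := by
  induction f using MvPolynomial.induction_on <;> simp_all

variable [IsAlgClosed K]

theorem exists_ne_forall_eval_eq_zero [Finite σ] {ι : Type*} [Finite ι]
    (f : ι → MvPolynomial σ K) (hcard : Nat.card ι < Nat.card σ) (a : σ → K)
    (ha : ∀ t, eval a (f t) = 0) : ∃ p ≠ a, ∀ t, eval p (f t) = 0 := by
  by_contra! hsing
  obtain ⟨M, hM, hMh⟩ := exists_isMaximal_natCard_le_height (σ := σ) (K := K)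
  obtain ⟨b, rfl⟩ := eq_vanishingIdeal_singleton_of_isMaximal K hM
  -- translate the zero `a` of the `f t` to the point `b` of maximal height
  set g : ι → MvPolynomial σ K := fun t => aeval (fun k => X k + C ((a - b) k)) (f t)
  have hzero : zeroLocus K (Ideal.span (Set.range g)) = {b} := by
    rw [zeroLocus_span]
    ext x
    simp only [Set.forall_mem_range, aeval_eq_eval, eval_aeval_X_add_C, g,
      Set.mem_ofPred_eq, Set.mem_singleton_iff]
    constructor
    · intro hx
      by_contra hxb
      obtain ⟨t, ht⟩ := hsing (x + (a - b)) fun h => hxb <| by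
        rw [eq_sub_of_add_eq h, sub_sub_cancel]
      exact ht (hx t)
    · rintro rfl t
      rw [add_sub_cancel]
      exact ha t
  have hmin : vanishingIdeal K {b} ∈ (Ideal.span (Set.range g)).minimalPrimes := by
    rw [← Ideal.radical_minimalPrimes, ← vanishingIdeal_zeroLocus_eq_radical (K := K), hzero,
      Ideal.minimalPrimes_eq_subsingleton_self]
    rfl
  have hle := Ideal.height_le_card_of_mem_minimalPrimes_span (Set.finite_range g) hmin
  have hrange : (Set.range g).ncard ≤ Nat.card ι := by
    rw [← Nat.card_coe_set_eq]
    exact Finite.card_range_le g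
  have hheight := hMh.trans hle
  norm_cast at hheight
  omega

end Krull

section HyperplaneSection

variable {τ K : Type*} [Field K] [IsAlgClosed K] [Finite τ] {F : MvPolynomial τ K} {w : τ → ℕ}
  {d : ℕ} {i : τ}

theorem IsQuasiSmooth.exists_eval_pderiv_killCompl_ne_zero (hF : IsQuasiSmooth F)
    (hhom : IsWeightedHomogeneous w F d) (hi : w i < d) {ι : Type*} [Finite ι]
    (f : ι → MvPolynomial {k // k ≠ i} K) (hcard : Nat.card ι + 1 < Nat.card {k // k ≠ i})
    (hf : ∀ t, constantCoeff (f t) = 0) :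
    ∃ q, (∀ t, eval q (f t) = 0) ∧
      ∃ j, eval q (pderiv j (killCompl (Subtype.val_injective (p := (· ≠ i))) F)) ≠ 0 := by
  set H := killCompl (Subtype.val_injective (p := (· ≠ i))) (pderiv i F)
  have hH : constantCoeff H = 0 :=
    ((hhom.pderiv (Nat.sub_add_cancel hi.le)).killCompl _).constantCoeff_eq_zero (by omega)
  obtain ⟨q, hq0, hq⟩ := exists_ne_forall_eval_eq_zero (fun o : Option ι => o.elim H f)
    (by rwa [Finite.card_option]) 0 fun o => by cases o <;> simp [eval_zero, hH, hf]
  refine ⟨q, fun t => hq (some t), ?_⟩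
  by_contra! hsing
  refine hq0 (hF.eq_zero_of_eval_pderiv_killCompl _ hsing fun s hs => ?_)
  obtain rfl : s = i := by simpa using hs
  exact hq none

theorem IsQuasiSmooth.killCompl_ne_zero (hF : IsQuasiSmooth F)
    (hhom : IsWeightedHomogeneous w F d) (hi : w i < d) (hcard : 1 < Nat.card {k // k ≠ i}) :
    killCompl (Subtype.val_injective (p := (· ≠ i))) F ≠ 0 := by
  intro h0
  obtain ⟨q, -, j, hj⟩ := hF.exists_eval_pderiv_killCompl_ne_zero hhom hi (Empty.elim : Empty → _)
    (by simpa using hcard) Empty.rec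
  simp [h0] at hj

theorem IsQuasiSmooth.irreducible_killCompl (hF : IsQuasiSmooth F) (hw : ∀ k, w k ≠ 0)
    (hhom : IsWeightedHomogeneous w F d) (hi : w i < d) (hcard : 3 < Nat.card {k // k ≠ i}) :
    Irreducible (killCompl (Subtype.val_injective (p := (· ≠ i))) F) := by
  have hG := hhom.killCompl (Subtype.val_injective (p := (· ≠ i)))
  have hG0 := hF.killCompl_ne_zero hhom hi (by omega)
  refine irreducible_iff.mpr ⟨fun hu => ?_, fun A B hAB => ?_⟩
  · have := hu.map constantCoeff
    rw [hG.constantCoeff_eq_zero (by omega)] at this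
    exact not_isUnit_zero this
  by_contra! hAB'
  have hw' : ∀ k : {k // k ≠ i}, w k ≠ 0 := fun k => hw k
  have hA := hG.constantCoeff_eq_zero_of_dvd hw' hG0 (hAB ▸ dvd_mul_right A B) hAB'.1
  have hB := hG.constantCoeff_eq_zero_of_dvd hw' hG0 (hAB ▸ dvd_mul_left B A) hAB'.2
  obtain ⟨q, hq, j, hj⟩ := hF.exists_eval_pderiv_killCompl_ne_zero hhom hi ![A, B]
    (by simpa using hcard) fun t => by fin_cases t <;> simpa
  have hqA : eval q A = 0 := by simpa using hq 0
  have hqB : eval q B = 0 := by simpa using hq 1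
  simp [hAB, Derivation.leibniz, hqA, hqB] at hj

end HyperplaneSection

end MvPolynomial

/-- For a quasi-smooth weighted homogeneous polynomial `F` of degree `d` in five
variables, and every index `i` with `w i < d`, the restriction of `F` to the
hyperplane `xᵢ = 0` is a nonzero irreducible polynomial in the remaining four
variables. -/
theorem quasismooth_restriction_nonzero_irreducible
    (w : Fin 5 → ℕ) (hw : ∀ i, 0 < w i) (d : ℕ)
    (F : MvPolynomial (Fin 5) ℂ)
    (hhom : IsWeightedHomogeneous w F d)
    (hqs : ∀ p : Fin 5 → ℂ, (∀ i : Fin 5, eval p (pderiv i F) = 0) → p = 0)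
    (i : Fin 5) (hi : w i < d) :
    aeval
        ((fun j : Fin 5 => if h : j = i then 0 else X ⟨j, h⟩) :
          Fin 5 → MvPolynomial {k : Fin 5 // k ≠ i} ℂ) F ≠ 0 ∧
      Irreducible
        (aeval
          ((fun j : Fin 5 => if h : j = i then 0 else X ⟨j, h⟩) :
            Fin 5 → MvPolynomial {k : Fin 5 // k ≠ i} ℂ) F) := by
  have hqs : IsQuasiSmooth F := hqs
  have hcard : Nat.card {k // k ≠ i} = 4 := by
    simp [Nat.card_eq_fintype_card, Fintype.card_subtype_compl]
  rw [← killCompl_subtype_val_eq_aeval]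
  exact ⟨hqs.killCompl_ne_zero hhom hi (by omega),
    hqs.irreducible_killCompl (fun k => (hw k).ne') hhom hi (by omega)⟩
end

section
/- Let R be a commutative ring and let z, t, w, a, b, c, d ∈ R. Define F = z·w² + a·w − t·z³ − b·z² − c·z + d, u = w² − t·z² − b·z − c, and v = u·w + a·z·t + a·b. Then v² − a·b·v − (u³ + c·u² − (b·d + a²·t)·u + (d² − a²·c)·t) lies in the principal ideal of R generated by F. -/
theorem weierstrass_form_sub_eq_mul {R : Type*} [CommRing R] (z t w a b c d u v : R)
    (hu : u = w ^ 2 - t * z ^ 2 - b * z - c) (hv : v = u * w + a * z * t + a * b) :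
    v ^ 2 - a * b * v -
        (u ^ 3 + c * u ^ 2 - (b * d + a ^ 2 * t) * u + (d ^ 2 - a ^ 2 * c) * t) =
      ((t * z + b) * u + a * t * w - t * d) *
        (z * w ^ 2 + a * w - t * z ^ 3 - b * z ^ 2 - c * z + d) := by
  subst hv hu
  ring

/-- The Weierstrass-form identity behind the elliptic involution of the paper
(families No. 20 and 36): with `F = zw² + aw − tz³ − bz² − cz + d`,
`u = w² − tz² − bz − c` and `v = uw + azt + ab`, the element
`v² − abv − (u³ + cu² − (bd + a²t)u + (d² − a²c)t)` lies in the ideal `(F)`. -/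
theorem elliptic_involution_weierstrass_identity
    {R : Type*} [CommRing R] (z t w a b c d : R) (F u v : R)
    (hF : F = z * w ^ 2 + a * w - t * z ^ 3 - b * z ^ 2 - c * z + d)
    (hu : u = w ^ 2 - t * z ^ 2 - b * z - c)
    (hv : v = u * w + a * z * t + a * b) :
    v ^ 2 - a * b * v -
        (u ^ 3 + c * u ^ 2 - (b * d + a ^ 2 * t) * u + (d ^ 2 - a ^ 2 * c) * t) ∈
      Ideal.span {F} :=
  Ideal.mem_span_singleton'.mpr
    ⟨_, hF ▸ (weierstrass_form_sub_eq_mul z t w a b c d u v hu hv).symm⟩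
end

section
/- Let g₂, g₄, h₃, h₅, h₇ ∈ ℂ[x,y,z] be homogeneous polynomials (in the standard grading) of degrees 2, 4, 3, 5, 7 respectively, and define F = y·w² + w·(t·g₂ + g₄) + y·t³ + t²·h₃ + t·h₅ + h₇ ∈ ℂ[x,y,z,t,w] (a weighted homogeneous polynomial of degree 7 for the weights (1,1,1,2,3)). Then for every (t₀, w₀) ∈ ℂ² with w₀² + t₀³ = 0, all five partial derivatives of F vanish at the point (0,0,0,t₀,w₀); in particular they vanish at (0,0,0,−1,1) ≠ 0, so F is not quasi-smooth. -/
open MvPolynomial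

/-!
At `v = (0,0,0,t,w)` every coefficient polynomial `g₂, g₄, h₃, h₅, h₇` vanishes together with
all its first partial derivatives, since each of its monomials has degree at least two in the
vanishing coordinates `x, y, z`. What survives of `∇F` at `v` is `∂F/∂y = w² + t³`, which is
zero by assumption.
-/

namespace MvPolynomial

variable {σ R : Type*} [CommSemiring R]

def VanishesToOrderTwoAt (v : σ → R) (p : MvPolynomial σ R) : Prop :=
  eval v p = 0 ∧ ∀ i, eval v (pderiv i p) = 0

variable {v : σ → R} {s : Finset σ}

theorem eval_monomial_eq_zero_of_one_le_sum (hv : ∀ j ∈ s, v j = 0) {m : σ →₀ ℕ}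
    (hm : 1 ≤ ∑ j ∈ s, m j) (a : R) : eval v (monomial m a) = 0 := by
  obtain ⟨j, hjs, hmj⟩ := Finset.exists_ne_zero_of_sum_ne_zero (Nat.one_le_iff_ne_zero.mp hm)
  rw [eval_monomial, Finsupp.prod, Finset.prod_eq_zero (Finsupp.mem_support_iff.mpr hmj)
    (by rw [hv j hjs, zero_pow hmj]), mul_zero]

theorem eval_eq_zero_of_one_le_sum (hv : ∀ j ∈ s, v j = 0) {p : MvPolynomial σ R}
    (hp : ∀ m ∈ p.support, 1 ≤ ∑ j ∈ s, m j) : eval v p = 0 := by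
  rw [p.as_sum, map_sum]
  exact Finset.sum_eq_zero fun m hm ↦ eval_monomial_eq_zero_of_one_le_sum hv (hp m hm) _

theorem sum_le_sum_tsub_single_add_one (m : σ →₀ ℕ) (i : σ) :
    ∑ j ∈ s, m j ≤ ∑ j ∈ s, (m - Finsupp.single i 1 : σ →₀ ℕ) j + 1 := by
  calc ∑ j ∈ s, m j
      ≤ ∑ j ∈ s, ((m - Finsupp.single i 1 : σ →₀ ℕ) j + Finsupp.single i 1 j) :=
        Finset.sum_le_sum fun j _ ↦ by rw [Finsupp.tsub_apply]; exact le_tsub_add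
    _ ≤ ∑ j ∈ s, (m - Finsupp.single i 1 : σ →₀ ℕ) j + 1 := by
        classical
        rw [Finset.sum_add_distrib]
        gcongr
        simp only [Finsupp.single_apply, Finset.sum_ite_eq]
        split_ifs <;> simp

theorem eval_pderiv_eq_zero_of_two_le_sum (hv : ∀ j ∈ s, v j = 0) {p : MvPolynomial σ R}
    (hp : ∀ m ∈ p.support, 2 ≤ ∑ j ∈ s, m j) (i : σ) : eval v (pderiv i p) = 0 := by
  classical
  rw [p.as_sum, map_sum, map_sum]
  refine Finset.sum_eq_zero fun m hm ↦ ?_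
  rw [pderiv_monomial]
  refine eval_monomial_eq_zero_of_one_le_sum hv ?_ _
  have := sum_le_sum_tsub_single_add_one (s := s) m i
  have := hp m hm
  omega

theorem IsHomogeneous.sum_eq_of_support_subset {p : MvPolynomial σ R} {n : ℕ}
    (hp : p.IsHomogeneous n) (hs : ∀ m ∈ p.support, ∀ j ∉ s, m j = 0) {m : σ →₀ ℕ}
    (hm : m ∈ p.support) : ∑ j ∈ s, m j = n := by
  rw [hp.degree_eq_sum_deg_support hm]
  refine (Finset.sum_subset (fun j hj ↦ ?_) fun j _ hj ↦ Finsupp.notMem_support_iff.mp hj).symm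
  by_contra hjs
  exact Finsupp.mem_support_iff.mp hj (hs m hm j hjs)

theorem IsHomogeneous.vanishesToOrderTwoAt {p : MvPolynomial σ R} {n : ℕ}
    (hp : p.IsHomogeneous n) (hn : 2 ≤ n) (hs : ∀ m ∈ p.support, ∀ j ∉ s, m j = 0)
    (hv : ∀ j ∈ s, v j = 0) : VanishesToOrderTwoAt v p :=
  have hsum : ∀ m ∈ p.support, 2 ≤ ∑ j ∈ s, m j := fun _ hm ↦
    (hp.sum_eq_of_support_subset hs hm).symm ▸ hn
  ⟨eval_eq_zero_of_one_le_sum hv fun m hm ↦ le_trans one_le_two (hsum m hm),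
    eval_pderiv_eq_zero_of_two_le_sum hv hsum⟩

end MvPolynomial

theorem eval_pderiv_family5_eq_zero {R : Type*} [CommRing R]
    {g2 g4 h3 h5 h7 : MvPolynomial (Fin 5) R} {t w : R}
    (hg2 : VanishesToOrderTwoAt ![0, 0, 0, t, w] g2)
    (hg4 : VanishesToOrderTwoAt ![0, 0, 0, t, w] g4)
    (hh3 : VanishesToOrderTwoAt ![0, 0, 0, t, w] h3)
    (hh5 : VanishesToOrderTwoAt ![0, 0, 0, t, w] h5)
    (hh7 : VanishesToOrderTwoAt ![0, 0, 0, t, w] h7)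
    (htw : w ^ 2 + t ^ 3 = 0) (i : Fin 5) :
    eval ![0, 0, 0, t, w] (pderiv i (X 1 * X 4 ^ 2 + X 4 * (X 3 * g2 + g4) + X 1 * X 3 ^ 3 +
      X 3 ^ 2 * h3 + X 3 * h5 + h7)) = 0 := by
  fin_cases i <;>
    simp [pderiv_X, hg2.1, hg2.2, hg4.1, hg4.2, hh3.1, hh3.2, hh5.1, hh5.2, hh7.2]
  linear_combination htw

/-- Family No. 5 (X₇ ⊂ ℙ(1,1,1,2,3)): a hypersurface of the form
`yw² + w(tg₂ + g₄) + yt³ + t²h₃ + th₅ + h₇`, with `g₂,g₄,h₃,h₅,h₇` homogeneous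
polynomials in `x,y,z` of the indicated degrees, has all five partial derivatives
vanishing at every point `(0,0,0,t₀,w₀)` with `w₀² + t₀³ = 0`; in particular at
`(0,0,0,−1,1) ≠ 0`, so it is not quasi-smooth. -/
theorem family5_equal_w2_t3_coefficients_not_quasismooth
    (g2 g4 h3 h5 h7 : MvPolynomial (Fin 5) ℂ)
    (hg2supp : ∀ m ∈ g2.support, m 3 = 0 ∧ m 4 = 0)
    (hg4supp : ∀ m ∈ g4.support, m 3 = 0 ∧ m 4 = 0)
    (hh3supp : ∀ m ∈ h3.support, m 3 = 0 ∧ m 4 = 0)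
    (hh5supp : ∀ m ∈ h5.support, m 3 = 0 ∧ m 4 = 0)
    (hh7supp : ∀ m ∈ h7.support, m 3 = 0 ∧ m 4 = 0)
    (hg2 : g2.IsHomogeneous 2) (hg4 : g4.IsHomogeneous 4)
    (hh3 : h3.IsHomogeneous 3) (hh5 : h5.IsHomogeneous 5) (hh7 : h7.IsHomogeneous 7)
    (F : MvPolynomial (Fin 5) ℂ)
    (hF : F = X 1 * X 4 ^ 2 + X 4 * (X 3 * g2 + g4) + X 1 * X 3 ^ 3 +
        X 3 ^ 2 * h3 + X 3 * h5 + h7) :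
    (∀ t0 w0 : ℂ, w0 ^ 2 + t0 ^ 3 = 0 →
        ∀ i : Fin 5, eval ![0, 0, 0, t0, w0] (pderiv i F) = 0) ∧
      (∀ i : Fin 5, eval ![0, 0, 0, -1, 1] (pderiv i F) = 0) ∧
      (![0, 0, 0, -1, 1] : Fin 5 → ℂ) ≠ 0 ∧
      ¬(∀ p : Fin 5 → ℂ, (∀ i : Fin 5, eval p (pderiv i F) = 0) → p = 0) := by
  have hxyz : ∀ {q : MvPolynomial (Fin 5) ℂ}, (∀ m ∈ q.support, m 3 = 0 ∧ m 4 = 0) →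
      ∀ m ∈ q.support, ∀ j ∉ ({0, 1, 2} : Finset (Fin 5)), m j = 0 := by
    intro q hq m hm j hj
    fin_cases j <;> simp_all
  have hv : ∀ t w : ℂ, ∀ j ∈ ({0, 1, 2} : Finset (Fin 5)), ![0, 0, 0, t, w] j = 0 := by
    simp
  have hsing (t w : ℂ) (htw : w ^ 2 + t ^ 3 = 0) (i : Fin 5) :
      eval ![0, 0, 0, t, w] (pderiv i F) = 0 :=
    hF ▸ eval_pderiv_family5_eq_zero
      (hg2.vanishesToOrderTwoAt le_rfl (hxyz hg2supp) (hv t w))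
      (hg4.vanishesToOrderTwoAt (by norm_num) (hxyz hg4supp) (hv t w))
      (hh3.vanishesToOrderTwoAt (by norm_num) (hxyz hh3supp) (hv t w))
      (hh5.vanishesToOrderTwoAt (by norm_num) (hxyz hh5supp) (hv t w))
      (hh7.vanishesToOrderTwoAt (by norm_num) (hxyz hh7supp) (hv t w)) htw i
  have hne : (![0, 0, 0, -1, 1] : Fin 5 → ℂ) ≠ 0 := fun h ↦ by simpa using congrFun h 4
  exact ⟨hsing, hsing (-1) 1 (by norm_num), hne,
    fun hqs ↦ hne (hqs _ (hsing (-1) 1 (by norm_num)))⟩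
end

section
/- Let f₂ ∈ ℂ[x,y] be weighted homogeneous of degree 2 (weights 1,1), let f₄, f₆, f₈ ∈ ℂ[x,y,z] be weighted homogeneous of degrees 4, 6, 8 (weights 1,1,2), and let f₅ ∈ ℂ[x,y,z,t] be weighted homogeneous of degree 5 (weights 1,1,2,2) whose coefficients of the monomials x·t² and y·t² are both zero. Define F = (z + f₂)·w² + w·f₅ − z·t³ − t²·f₄ − t·f₆ + f₈ ∈ ℂ[x,y,z,t,w]. Then all five partial derivatives of F vanish at the point (0,0,0,1,1) ∈ ℂ⁵; in particular F is not quasi-smooth. -/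
/-!
A derivation maps the square of an ideal into the ideal, so all partial derivatives of `F` vanish
at `p = (0,0,0,1,1)` once `F` lies in `𝔪²`, where `𝔪` is the maximal ideal of `p`. Write
`F = z(w² - t³) + f₂w² + wf₅ - t²f₄ - tf₆ + f₈`: the first term is a product of two elements of
`𝔪`, and by weight reasons every monomial of `f₂, f₄, f₆, f₈` has at least two factors among
`x, y, z`, hence lies in `(x, y, z)² ⊆ 𝔪²`. The same holds for `f₅` except for `xt²` and `yt²`.
-/

open MvPolynomial

theorem Derivation.apply_mem_of_mem_sq {R A : Type*} [CommSemiring R] [CommSemiring A] [Algebra R A]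
    (D : Derivation R A A) {I : Ideal A} {a : A} (ha : a ∈ I ^ 2) : D a ∈ I := by
  rw [sq] at ha
  refine Submodule.mul_induction_on ha (fun b hb c hc => ?_) fun b c hb hc => ?_
  · rw [D.leibniz, smul_eq_mul, smul_eq_mul]
    exact I.add_mem (I.mul_mem_right _ hb) (I.mul_mem_right _ hc)
  · rw [map_add]
    exact I.add_mem hb hc

namespace MvPolynomial

variable {σ R : Type*} [CommSemiring R] {I : Ideal (MvPolynomial σ R)} {s : Finset σ}

theorem monomial_mem_pow_of_le_sum (hs : ∀ j ∈ s, X j ∈ I) :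
    ∀ (k : ℕ) (m : σ →₀ ℕ) (c : R), k ≤ ∑ j ∈ s, m j → monomial m c ∈ I ^ k
  | 0, _, _, _ => by simp
  | k + 1, m, c, hk => by
    obtain ⟨a, ha, hma⟩ : ∃ a ∈ s, m a ≠ 0 := Finset.exists_ne_zero_of_sum_ne_zero (by omega)
    have hm : m - Finsupp.single a 1 + Finsupp.single a 1 = m :=
      tsub_add_cancel_of_le (Finsupp.single_le_iff.2 (Nat.one_le_iff_ne_zero.2 hma))
    have hk' : k ≤ ∑ j ∈ s, (m - Finsupp.single a 1 : σ →₀ ℕ) j := by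
      rw [← hm] at hk
      classical
      simp only [Finsupp.add_apply, Finset.sum_add_distrib, Finsupp.single_apply, Finset.sum_ite_eq,
        if_pos ha] at hk
      omega
    rw [← hm, ← mul_one c, ← monomial_mul, pow_succ]
    exact Ideal.mul_mem_mul (monomial_mem_pow_of_le_sum hs k _ _ hk') (hs a ha)

theorem mem_pow_of_le_sum (hs : ∀ j ∈ s, X j ∈ I) {k : ℕ} {g : MvPolynomial σ R}
    (hg : ∀ m ∈ g.support, k ≤ ∑ j ∈ s, m j) : g ∈ I ^ k := by
  rw [g.as_sum]
  exact Ideal.sum_mem _ fun m hm => monomial_mem_pow_of_le_sum hs k m _ (hg m hm)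

end MvPolynomial

local notation "𝔪" => RingHom.ker (eval (![0, 0, 0, 1, 1] : Fin 5 → ℂ))

theorem mem_sq_maxIdeal_of_two_le {g : MvPolynomial (Fin 5) ℂ}
    (hg : ∀ m ∈ g.support, 2 ≤ m 0 + m 1 + m 2) : g ∈ 𝔪 ^ 2 := by
  refine mem_pow_of_le_sum (s := {0, 1, 2}) (fun j hj => ?_) fun m hm => ?_
  · fin_cases hj <;> simp
  · simpa [Finset.sum_insert, add_assoc] using hg m hm

theorem weight_11223_apply (m : Fin 5 →₀ ℕ) :
    Finsupp.weight (![1, 1, 2, 2, 3] : Fin 5 → ℕ) m = m 0 + m 1 + 2 * m 2 + 2 * m 3 + 3 * m 4 := by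
  simp [Finsupp.weight_apply, Finsupp.sum_fintype, Fin.sum_univ_five, mul_comm]

theorem weight_11223_of_mem_support {f : MvPolynomial (Fin 5) ℂ} {d : ℕ}
    (hf : IsWeightedHomogeneous (![1, 1, 2, 2, 3] : Fin 5 → ℕ) f d) {m : Fin 5 →₀ ℕ}
    (hm : m ∈ f.support) : m 0 + m 1 + 2 * m 2 + 2 * m 3 + 3 * m 4 = d := by
  rw [← weight_11223_apply]
  exact hf (mem_support_iff.1 hm)

theorem mem_sq_maxIdeal_of_isWeightedHomogeneous_two {f : MvPolynomial (Fin 5) ℂ}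
    (hf : IsWeightedHomogeneous (![1, 1, 2, 2, 3] : Fin 5 → ℕ) f 2)
    (hsupp : ∀ m ∈ f.support, m 2 = 0 ∧ m 3 = 0 ∧ m 4 = 0) : f ∈ 𝔪 ^ 2 :=
  mem_sq_maxIdeal_of_two_le fun m hm => by
    have := weight_11223_of_mem_support hf hm
    have := hsupp m hm
    omega

theorem mem_sq_maxIdeal_of_isWeightedHomogeneous {f : MvPolynomial (Fin 5) ℂ} {d : ℕ}
    (hf : IsWeightedHomogeneous (![1, 1, 2, 2, 3] : Fin 5 → ℕ) f d) (hd : 4 ≤ d)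
    (hsupp : ∀ m ∈ f.support, m 3 = 0 ∧ m 4 = 0) : f ∈ 𝔪 ^ 2 :=
  mem_sq_maxIdeal_of_two_le fun m hm => by
    have := weight_11223_of_mem_support hf hm
    have := hsupp m hm
    omega

theorem mem_sq_maxIdeal_of_isWeightedHomogeneous_five {f : MvPolynomial (Fin 5) ℂ}
    (hf : IsWeightedHomogeneous (![1, 1, 2, 2, 3] : Fin 5 → ℕ) f 5)
    (hsupp : ∀ m ∈ f.support, m 4 = 0)
    (hxt2 : coeff (Finsupp.single 0 1 + Finsupp.single 3 2) f = 0)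
    (hyt2 : coeff (Finsupp.single 1 1 + Finsupp.single 3 2) f = 0) : f ∈ 𝔪 ^ 2 := by
  refine mem_sq_maxIdeal_of_two_le fun m hm => ?_
  have hw := weight_11223_of_mem_support hf hm
  have hm4 := hsupp m hm
  by_contra hlt
  rcases Nat.eq_zero_or_pos (m 0) with hm0 | hm0
  · have : m = Finsupp.single 1 1 + Finsupp.single 3 2 := by
      ext j; fin_cases j <;> simp <;> omega
    exact mem_support_iff.1 hm (this ▸ hyt2)
  · have : m = Finsupp.single 0 1 + Finsupp.single 3 2 := by
      ext j; fin_cases j <;> simp <;> omega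
    exact mem_support_iff.1 hm (this ▸ hxt2)

/-- Family No. 7 (X₈ ⊂ ℙ(1,1,2,2,3)), Type II: in the equation
`(z + f₂)w² + wf₅ − zt³ − t²f₄ − tf₆ + f₈` the polynomial `f₅` must contain
`xt²` or `yt²`; if both coefficients vanish, then all five partial derivatives
vanish at `(0,0,0,1,1)`, so the hypersurface is not quasi-smooth. -/
theorem family7_typeII_f5_must_contain_xt2_or_yt2
    (f2 f4 f5 f6 f8 : MvPolynomial (Fin 5) ℂ)
    (hf2supp : ∀ m ∈ f2.support, m 2 = 0 ∧ m 3 = 0 ∧ m 4 = 0)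
    (hf4supp : ∀ m ∈ f4.support, m 3 = 0 ∧ m 4 = 0)
    (hf6supp : ∀ m ∈ f6.support, m 3 = 0 ∧ m 4 = 0)
    (hf8supp : ∀ m ∈ f8.support, m 3 = 0 ∧ m 4 = 0)
    (hf5supp : ∀ m ∈ f5.support, m 4 = 0)
    (hf2 : IsWeightedHomogeneous (![1, 1, 2, 2, 3] : Fin 5 → ℕ) f2 2)
    (hf4 : IsWeightedHomogeneous (![1, 1, 2, 2, 3] : Fin 5 → ℕ) f4 4)
    (hf5 : IsWeightedHomogeneous (![1, 1, 2, 2, 3] : Fin 5 → ℕ) f5 5)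
    (hf6 : IsWeightedHomogeneous (![1, 1, 2, 2, 3] : Fin 5 → ℕ) f6 6)
    (hf8 : IsWeightedHomogeneous (![1, 1, 2, 2, 3] : Fin 5 → ℕ) f8 8)
    (hxt2 : coeff (Finsupp.single 0 1 + Finsupp.single 3 2) f5 = 0)
    (hyt2 : coeff (Finsupp.single 1 1 + Finsupp.single 3 2) f5 = 0)
    (F : MvPolynomial (Fin 5) ℂ)
    (hF : F = (X 2 + f2) * X 4 ^ 2 + X 4 * f5 - X 2 * X 3 ^ 3 -
        X 3 ^ 2 * f4 - X 3 * f6 + f8) :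
    (∀ i : Fin 5, eval ![0, 0, 0, 1, 1] (pderiv i F) = 0) ∧
      ¬(∀ p : Fin 5 → ℂ, (∀ i : Fin 5, eval p (pderiv i F) = 0) → p = 0) := by
  have hF𝔪 : F ∈ 𝔪 ^ 2 := by
    have hzt : X 2 * (X 4 ^ 2 - X 3 ^ 3) ∈ 𝔪 ^ 2 := by
      rw [sq]
      exact Ideal.mul_mem_mul (by simp) (by simp)
    rw [hF, show (X 2 + f2) * X 4 ^ 2 + X 4 * f5 - X 2 * X 3 ^ 3 - X 3 ^ 2 * f4 - X 3 * f6 + f8 =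
      X 2 * (X 4 ^ 2 - X 3 ^ 3) + f2 * X 4 ^ 2 + X 4 * f5 - X 3 ^ 2 * f4 - X 3 * f6 + f8 by ring]
    refine add_mem (sub_mem (sub_mem (add_mem (add_mem hzt ?_) ?_) ?_) ?_) ?_
    · exact Ideal.mul_mem_right _ _ (mem_sq_maxIdeal_of_isWeightedHomogeneous_two hf2 hf2supp)
    · exact Ideal.mul_mem_left _ _ (mem_sq_maxIdeal_of_isWeightedHomogeneous_five hf5 hf5supp hxt2 hyt2)
    · exact Ideal.mul_mem_left _ _ (mem_sq_maxIdeal_of_isWeightedHomogeneous hf4 le_rfl hf4supp)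
    · exact Ideal.mul_mem_left _ _ (mem_sq_maxIdeal_of_isWeightedHomogeneous hf6 (by norm_num) hf6supp)
    · exact mem_sq_maxIdeal_of_isWeightedHomogeneous hf8 (by norm_num) hf8supp
  have hcrit : ∀ i : Fin 5, eval ![0, 0, 0, 1, 1] (pderiv i F) = 0 :=
    fun i => (pderiv i).apply_mem_of_mem_sq hF𝔪
  exact ⟨hcrit, fun h => by simpa using congrFun (h _ hcrit) 3⟩
end

section
/- Let F ∈ ℂ[x,y,z,t,w] be weighted homogeneous of degree 8 with respect to the weights (1,1,2,2,3) and quasi-smooth. Then the binary form q(z,t) = F(0,0,z,t,0) ∈ ℂ[z,t] — which is homogeneous of ordinary degree 4 in z and t — is nonzero and squarefree; equivalently, q has four distinct roots in ℙ¹. -/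
/-!
A repeated factor `g` of `q(z, t) = F(0, 0, z, t, 0)` is a non-unit of `ℂ[z, t]`, so by the
Nullstellensatz it vanishes at some `v ≠ 0`, where both partials of `q` then vanish. At the point
`p = (0, 0, v₀, v₁, 0)` the partials of `F` in `z, t` are those of `q` (chain rule), while
`∂F/∂x, ∂F/∂y, ∂F/∂w` are weighted homogeneous of odd degree `7, 7, 5` and so vanish at `p`,
where only the coordinates of even weight are nonzero. Quasi-smoothness forces `p = 0`, i.e.
`v = 0`.
-/

open MvPolynomial

namespace MvPolynomial

variable {R σ : Type*} [CommSemiring R]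

theorem IsWeightedHomogeneous.of_nsmul_weight {w : σ → ℕ} {F : MvPolynomial σ R} {k m : ℕ}
    (hF : IsWeightedHomogeneous (k • w) F (k * m)) (hk : k ≠ 0) :
    IsWeightedHomogeneous w F m := by
  intro d hd
  have hkd := hF hd
  simp only [Finsupp.weight_apply, Pi.smul_apply, smul_eq_mul, Finsupp.sum] at hkd ⊢
  simp_rw [mul_left_comm _ k, ← Finset.mul_sum] at hkd
  exact Nat.eq_of_mul_eq_mul_left (Nat.pos_of_ne_zero hk) hkd

theorem IsWeightedHomogeneous.aeval {τ M : Type*} [AddCommMonoid M] {w : σ → M} {w' : τ → M}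
    {F : MvPolynomial σ R} {m : M} (hF : IsWeightedHomogeneous w F m)
    {s : σ → MvPolynomial τ R} (hs : ∀ i, IsWeightedHomogeneous w' (s i) (w i)) :
    IsWeightedHomogeneous w' (MvPolynomial.aeval s F) m := by
  induction hF using IsWeightedHomogeneous.induction_on with
  | zero => simpa using isWeightedHomogeneous_zero R w' _
  | add p q _ _ hp hq => simpa using hp.add hq
  | monomial d r hd =>
    rw [aeval_monomial, algebraMap_eq, ← hd, Finsupp.weight_apply]
    exact (IsWeightedHomogeneous.prod _ _ _ fun i _ => (hs i).pow (d i)).C_mul r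

theorem IsWeightedHomogeneous.eval_eq_zero_of_not_dvd {w : σ → ℕ} {F : MvPolynomial σ R}
    {m k : ℕ} (hF : IsWeightedHomogeneous w F m) (hm : ¬ k ∣ m) {p : σ → R}
    (hp : ∀ i, p i ≠ 0 → k ∣ w i) : eval p F = 0 := by
  induction hF using IsWeightedHomogeneous.induction_on with
  | zero => simp
  | add p q _ _ hp hq => simp [hp, hq]
  | monomial d r hd =>
    obtain ⟨i, hdi, hpi⟩ : ∃ i ∈ d.support, p i = 0 := by
      by_contra! h
      exact hm (hd ▸ Finset.dvd_sum fun i hi => (hp i (h i hi)).mul_left _)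
    rw [eval_monomial, Finsupp.prod,
      Finset.prod_eq_zero hdi (by simp [hpi, Finsupp.mem_support_iff.mp hdi]), mul_zero]

theorem pderiv_aeval {τ : Type*} [Fintype σ] [DecidableEq σ] (k : τ)
    (s : σ → MvPolynomial τ R) (F : MvPolynomial σ R) :
    pderiv k (aeval s F) = ∑ i, aeval s (pderiv i F) * pderiv k (s i) := by
  induction F using MvPolynomial.induction_on with
  | C a => simp
  | add p q hp hq => simp only [map_add, hp, hq, add_mul, Finset.sum_add_distrib]
  | mul_X p n h =>
    simp only [map_mul, aeval_X, Derivation.leibniz, h, pderiv_X, smul_eq_mul, map_add, add_mul,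
      Finset.sum_add_distrib, Finset.mul_sum]
    congr 1
    · simp [Pi.single_apply]
    · exact Finset.sum_congr rfl fun i _ => by ring

theorem eval_aeval {τ : Type*} (v : τ → R) (s : σ → MvPolynomial τ R)
    (F : MvPolynomial σ R) :
    eval v (aeval s F) = eval (fun i => eval v (s i)) F :=
  eval₂Hom_bind₁ _ _ _ _

theorem eval_pderiv_eq_zero_of_mul_self_dvd {g q : MvPolynomial σ R} (hgq : g * g ∣ q)
    {v : σ → R} (hv : eval v g = 0) (k : σ) : eval v (pderiv k q) = 0 := by
  obtain ⟨c, rfl⟩ := hgq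
  simp [Derivation.leibniz, hv]

theorem isUnit_of_dvd_X_pow_of_dvd_X_pow {R : Type*} [CommRing R] [IsDomain R]
    {g : MvPolynomial σ R} {i j : σ} (hij : i ≠ j) {m n : ℕ} (hi : g ∣ X i ^ m)
    (hj : g ∣ X j ^ n) : IsUnit g := by
  obtain ⟨a, -, ha⟩ := (dvd_prime_pow X_prime m).mp hi
  rcases a with _ | a
  · simpa using ha
  · have hXij : X i ∣ X j ^ n := (dvd_pow_self _ a.succ_ne_zero).trans (ha.symm.dvd.trans hj)
    exact absurd (X_dvd_X.mp (X_prime.dvd_of_dvd_pow hXij)) hij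

variable {K : Type*} [Field K] [IsAlgClosed K] [Finite σ] [Nontrivial σ]

theorem exists_ne_zero_eval_eq_zero_of_not_isUnit {g : MvPolynomial σ K} (hg : ¬ IsUnit g) :
    ∃ v ≠ 0, eval v g = 0 := by
  by_contra! h
  have hX : ∀ i, ∃ n, g ∣ X i ^ n := by
    intro i
    have hXi : X i ∈ vanishingIdeal K (zeroLocus K (Ideal.span {g})) := by
      intro v hv
      obtain rfl : v = 0 :=
        by_contra fun hv0 => h v hv0 (hv g (Ideal.mem_span_singleton_self g))
      simp
    rw [vanishingIdeal_zeroLocus_eq_radical] at hXi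
    obtain ⟨n, hn⟩ := hXi
    exact ⟨n, Ideal.mem_span_singleton.mp hn⟩
  obtain ⟨i, j, hij⟩ := exists_pair_ne σ
  obtain ⟨m, hm⟩ := hX i
  obtain ⟨n, hn⟩ := hX j
  exact hg (isUnit_of_dvd_X_pow_of_dvd_X_pow hij hm hn)

theorem exists_ne_zero_eval_pderiv_eq_zero_of_not_squarefree {q : MvPolynomial σ K}
    (hq : ¬ Squarefree q) : ∃ v ≠ 0, ∀ k, eval v (pderiv k q) = 0 := by
  obtain ⟨g, hgq, hg⟩ : ∃ g, g * g ∣ q ∧ ¬ IsUnit g := by simpa [Squarefree] using hq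
  obtain ⟨v, hv, hgv⟩ := exists_ne_zero_eval_eq_zero_of_not_isUnit hg
  exact ⟨v, hv, eval_pderiv_eq_zero_of_mul_self_dvd hgq hgv⟩

end MvPolynomial

/-- Restriction to the stratum `L_{zt} = {x = y = w = 0}`, coordinates ordered `(x, y, z, t, w)`. -/
noncomputable def restrictZT : Fin 5 → MvPolynomial (Fin 2) ℂ :=
  fun i => if i = 2 then X 0 else if i = 3 then X 1 else 0

theorem isWeightedHomogeneous_restrictZT (i : Fin 5) :
    IsWeightedHomogeneous (2 • 1 : Fin 2 → ℕ) (restrictZT i) (![1, 1, 2, 2, 3] i) := by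
  fin_cases i <;> simp only [restrictZT] <;> first
    | exact isWeightedHomogeneous_zero ℂ _ _
    | exact isWeightedHomogeneous_X ℂ _ _

theorem isHomogeneous_aeval_restrictZT {F : MvPolynomial (Fin 5) ℂ} {n : ℕ}
    (hF : IsWeightedHomogeneous ![1, 1, 2, 2, 3] F (2 * n)) :
    (aeval restrictZT F).IsHomogeneous n :=
  (hF.aeval isWeightedHomogeneous_restrictZT).of_nsmul_weight two_ne_zero

theorem pderiv_aeval_restrictZT (k : Fin 2) (F : MvPolynomial (Fin 5) ℂ) :
    pderiv k (aeval restrictZT F) = aeval restrictZT (pderiv (![2, 3] k) F) := by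
  rw [pderiv_aeval]
  fin_cases k <;> simp [Fin.sum_univ_five, restrictZT, pderiv_X]

/-- Family No. 7: for a quasi-smooth weighted homogeneous `F` of degree 8 with
weights `(1,1,2,2,3)`, the binary form `q(z,t) = F(0,0,z,t,0)` is homogeneous of
degree 4, nonzero and squarefree. -/
theorem family7_binary_quartic_squarefree
    (F : MvPolynomial (Fin 5) ℂ)
    (hhom : IsWeightedHomogeneous (![1, 1, 2, 2, 3] : Fin 5 → ℕ) F 8)
    (hqs : ∀ p : Fin 5 → ℂ, (∀ i : Fin 5, eval p (pderiv i F) = 0) → p = 0) :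
    (aeval ((fun i : Fin 5 => if i = 2 then X 0 else if i = 3 then X 1 else 0) :
        Fin 5 → MvPolynomial (Fin 2) ℂ) F).IsHomogeneous 4 ∧
      aeval ((fun i : Fin 5 => if i = 2 then X 0 else if i = 3 then X 1 else 0) :
        Fin 5 → MvPolynomial (Fin 2) ℂ) F ≠ 0 ∧
      Squarefree
        (aeval ((fun i : Fin 5 => if i = 2 then X 0 else if i = 3 then X 1 else 0) :
          Fin 5 → MvPolynomial (Fin 2) ℂ) F) := by
  change (aeval restrictZT F).IsHomogeneous 4 ∧ aeval restrictZT F ≠ 0 ∧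
    Squarefree (aeval restrictZT F)
  have hsq : Squarefree (aeval restrictZT F) := by
    by_contra hnsq
    obtain ⟨v, hv, hvq⟩ := exists_ne_zero_eval_pderiv_eq_zero_of_not_squarefree hnsq
    set p : Fin 5 → ℂ := fun i => eval v (restrictZT i)
    have hp_even : ∀ i, p i ≠ 0 → 2 ∣ ![1, 1, 2, 2, 3] i := by
      intro i
      fin_cases i <;> simp [p, restrictZT]
    have hcrit : ∀ i, eval p (pderiv i F) = 0 := by
      intro i
      fin_cases i
      · exact (hhom.pderiv (n' := 7) rfl).eval_eq_zero_of_not_dvd (by decide) hp_even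
      · exact (hhom.pderiv (n' := 7) rfl).eval_eq_zero_of_not_dvd (by decide) hp_even
      · exact eval_aeval v restrictZT _ ▸ pderiv_aeval_restrictZT 0 F ▸ hvq 0
      · exact eval_aeval v restrictZT _ ▸ pderiv_aeval_restrictZT 1 F ▸ hvq 1
      · exact (hhom.pderiv (n' := 5) rfl).eval_eq_zero_of_not_dvd (by decide) hp_even
    have hp0 := hqs p hcrit
    apply hv
    ext j
    fin_cases j
    · simpa [p, restrictZT] using congrFun hp0 2
    · simpa [p, restrictZT] using congrFun hp0 3
  exact ⟨isHomogeneous_aeval_restrictZT hhom, hsq.ne_zero, hsq⟩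
end
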